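/- arXiv:1312.1359 — 5 statements merged into one kernel-verified Lean document; each statement's English description precedes it below -/
import Mathlib

section
/- Let ω be a hermitian positive linear functional on a non-unital complex *-algebra A. Assume: (HB) there exists δ > 0 such that ‖ω a‖² ≤ δ · (ω (star a * a)).re for all a ∈ A; (L.3) for every x ∈ A there exists γₓ > 0 such that ‖ω (star x * a)‖ ≤ γₓ · Real.sqrt ((ω (star a * a)).re) for all a ∈ A; (EHB) there exists ζ > 0 such that for every x ∈ A and every real p ≥ 0 satisfying ‖ω (star x * a)‖² ≤ p · (ω (star a * a)).re for all a ∈ A, one has ‖ω (star x)‖ ≤ ζ · Real.sqrt p. Then for every real γ ≥ δ, the extension ω^e with parameter γ is hermitian (ω^e (star X) = conj (ω^e X) for all X), positive (ω^e (star X * X) has zero imaginary part and nonnegative real part for all X in Unitization ℂ A), satisfies ω^e ∘ ι = ω, and satisfies condition (L.3) on the unitization: for every X in Unitization ℂ A there exists Γ > 0 such that ‖ω^e (star X * Y)‖ ≤ Γ · Real.sqrt ((ω^e (star Y * Y)).re) for all Y in Unitization ℂ A. -/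
/-!
Writing `X = (λ, x)`, one has `ω^e(X⋆X) = ω(x⋆x) + 2 Re(λ̄ ω(x)) + |λ|² γ`. By (HB) and `γ ≥ δ`,
`|ω(x)|² ≤ γ ω(x⋆x)`, so this quadratic form in `|λ|` has nonpositive discriminant and `ω^e` is
positive. Condition (L.3) then holds for every hermitian positive functional on a ⋆-algebra, by the
Cauchy–Schwarz inequality for the semi-inner product `⟪X, Y⟫ = ω^e(X⋆Y)`.
-/

/-- The extension `ω^e` with parameter `γ` of a linear functional `ω` on a non-unital
complex *-algebra `A` to the unitization `Unitization ℂ A`: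
`ω^e((λ, x)) = ω(x) + λ·γ`. -/
noncomputable def omegaExt {A : Type*} [NonUnitalRing A] [Module ℂ A]
    (ω : A →ₗ[ℂ] ℂ) (γ : ℝ) : Unitization ℂ A → ℂ :=
  fun X => ω X.snd + X.fst * γ

open ComplexConjugate

section StarMulForm

variable {R : Type*} [NonUnitalNonAssocRing R] [StarRing R] [Module ℂ R] {φ : R →ₗ[ℂ] ℂ}

theorem im_apply_star_mul_self_eq_zero (hherm : ∀ x, φ (star x) = conj (φ x)) (a : R) :
    (φ (star a * a)).im = 0 := by
  rw [← Complex.conj_eq_iff_im, ← hherm, star_mul, star_star]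

variable [StarModule ℂ R] [IsScalarTower ℂ R R]

abbrev starMulPreInnerCore (hherm : ∀ x, φ (star x) = conj (φ x))
    (hpos : ∀ a, 0 ≤ (φ (star a * a)).re) : PreInnerProductSpace.Core ℂ R where
  inner x y := φ (star x * y)
  conj_inner_symm x y := by rw [← hherm, star_mul, star_star]
  re_inner_nonneg := hpos
  add_left x y z := by rw [star_add, add_mul, map_add]
  smul_left x y c := by rw [star_smul, smul_mul_assoc, map_smul, smul_eq_mul, Complex.star_def]

theorem norm_apply_star_mul_sq_le (hherm : ∀ x, φ (star x) = conj (φ x))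
    (hpos : ∀ a, 0 ≤ (φ (star a * a)).re) (x y : R) :
    ‖φ (star x * y)‖ ^ 2 ≤ (φ (star x * x)).re * (φ (star y * y)).re := by
  let _ := starMulPreInnerCore hherm hpos
  have h := InnerProductSpace.Core.inner_mul_inner_self_le (𝕜 := ℂ) x y
  rwa [← InnerProductSpace.Core.inner_conj_symm y x, Complex.norm_conj, ← sq] at h

theorem exists_norm_apply_star_mul_le (hherm : ∀ x, φ (star x) = conj (φ x))
    (hpos : ∀ a, 0 ≤ (φ (star a * a)).re) (x : R) :
    ∃ Γ > 0, ∀ y, ‖φ (star x * y)‖ ≤ Γ * √(φ (star y * y)).re := by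
  refine ⟨√(φ (star x * x)).re + 1, by positivity, fun y => ?_⟩
  calc ‖φ (star x * y)‖ ≤ √(φ (star x * x)).re * √(φ (star y * y)).re := by
        rw [← Real.sqrt_mul (hpos x)]
        exact Real.le_sqrt_of_sq_le (norm_apply_star_mul_sq_le hherm hpos x y)
    _ ≤ (√(φ (star x * x)).re + 1) * √(φ (star y * y)).re := by gcongr; linarith

end StarMulForm

theorem two_mul_mul_le_of_sq_le {l t s γ : ℝ} (hγ : 0 < γ) (h : t ^ 2 ≤ γ * s) :
    2 * l * t ≤ l ^ 2 * γ + s := by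
  nlinarith [sq_nonneg (l * γ - t)]

section Extension

variable {A : Type*} [NonUnitalRing A] [Module ℂ A] (ω : A →ₗ[ℂ] ℂ) (γ : ℝ)

noncomputable def omegaExtLinearMap : Unitization ℂ A →ₗ[ℂ] ℂ where
  toFun := omegaExt ω γ
  map_add' X Y := by
    simp only [omegaExt, Unitization.fst_add, Unitization.snd_add, map_add]
    ring
  map_smul' c X := by
    simp only [omegaExt, Unitization.fst_smul, Unitization.snd_smul, map_smul, smul_eq_mul,
      RingHom.id_apply]
    ring

theorem omegaExt_inr (x : A) : omegaExt ω γ x = ω x := by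
  simp [omegaExt]

variable [StarRing A] {ω}

theorem omegaExt_star (hherm : ∀ x, ω (star x) = conj (ω x)) (X : Unitization ℂ A) :
    omegaExt ω γ (star X) = conj (omegaExt ω γ X) := by
  simp [omegaExt, hherm]

theorem omegaExt_star_mul_self (hherm : ∀ x, ω (star x) = conj (ω x)) (X : Unitization ℂ A) :
    omegaExt ω γ (star X * X) =
      ω (star X.snd * X.snd) + ((2 * (conj X.fst * ω X.snd).re + ‖X.fst‖ ^ 2 * γ : ℝ) : ℂ) := by
  simp only [omegaExt, Unitization.fst_mul, Unitization.snd_mul, Unitization.fst_star,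
    Unitization.snd_star, map_add, map_smul, smul_eq_mul, hherm, Complex.star_def]
  push_cast
  rw [Complex.re_eq_add_conj, ← Complex.conj_mul']
  simp only [map_mul, Complex.conj_conj]
  ring

theorem re_omegaExt_star_mul_self_nonneg (hherm : ∀ x, ω (star x) = conj (ω x))
    (hpos : ∀ a, 0 ≤ (ω (star a * a)).re) {δ : ℝ} (hδ : 0 < δ)
    (hHB : ∀ a, ‖ω a‖ ^ 2 ≤ δ * (ω (star a * a)).re) (hγ : δ ≤ γ) (X : Unitization ℂ A) :
    0 ≤ (omegaExt ω γ (star X * X)).re := by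
  have hbound : 2 * ‖X.fst‖ * ‖ω X.snd‖ ≤ ‖X.fst‖ ^ 2 * γ + (ω (star X.snd * X.snd)).re :=
    two_mul_mul_le_of_sq_le (hδ.trans_le hγ) <|
      (hHB X.snd).trans (mul_le_mul_of_nonneg_right hγ (hpos X.snd))
  have hcross : -(‖X.fst‖ * ‖ω X.snd‖) ≤ (conj X.fst * ω X.snd).re := by
    rw [← Complex.norm_conj X.fst, ← norm_mul]
    exact neg_le_of_abs_le (Complex.abs_re_le_norm _)
  rw [omegaExt_star_mul_self γ hherm, Complex.add_re, Complex.ofReal_re]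
  linarith [hpos X.snd]

end Extension

theorem extension_representable_general {A : Type*} [NonUnitalRing A] [StarRing A] [Module ℂ A]
    [StarModule ℂ A] [SMulCommClass ℂ A A] [IsScalarTower ℂ A A]
    (ω : A →ₗ[ℂ] ℂ)
    (hpos : ∀ a : A, (ω (star a * a)).im = 0 ∧ 0 ≤ (ω (star a * a)).re)
    (hherm : ∀ x : A, ω (star x) = starRingEnd ℂ (ω x))
    (δ : ℝ) (hδ : 0 < δ)
    (hHB : ∀ a : A, ‖ω a‖ ^ 2 ≤ δ * (ω (star a * a)).re)
    (γ : ℝ) (hγ : δ ≤ γ) :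
    (∀ X : Unitization ℂ A, omegaExt ω γ (star X) = starRingEnd ℂ (omegaExt ω γ X)) ∧
    (∀ X : Unitization ℂ A, (omegaExt ω γ (star X * X)).im = 0 ∧
      0 ≤ (omegaExt ω γ (star X * X)).re) ∧
    (∀ x : A, omegaExt ω γ (x : Unitization ℂ A) = ω x) ∧
    (∀ X : Unitization ℂ A, ∃ Γ > 0, ∀ Y : Unitization ℂ A,
      ‖omegaExt ω γ (star X * Y)‖ ≤ Γ * Real.sqrt (omegaExt ω γ (star Y * Y)).re) := by
  have hherm_ext : ∀ X, omegaExtLinearMap ω γ (star X) = conj (omegaExtLinearMap ω γ X) :=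
    omegaExt_star γ hherm
  have hpos_ext : ∀ X, 0 ≤ (omegaExtLinearMap ω γ (star X * X)).re :=
    re_omegaExt_star_mul_self_nonneg γ hherm (fun a => (hpos a).2) hδ hHB hγ
  exact ⟨hherm_ext, fun X => ⟨im_apply_star_mul_self_eq_zero hherm_ext X, hpos_ext X⟩,
    omegaExt_inr ω γ, exists_norm_apply_star_mul_le hherm_ext hpos_ext⟩

/-- **Main representability theorem.** If a hermitian positive linear functional `ω` on a
non-unital complex *-algebra satisfies (HB), (L.3) and (EHB), then for every `γ ≥ δ` the
extension `ω^e` to the unitization is hermitian, positive, extends `ω`, and satisfies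
(L.3) on the unitization. -/
theorem extension_representable {A : Type*} [NonUnitalRing A] [StarRing A] [Module ℂ A]
    [StarModule ℂ A] [SMulCommClass ℂ A A] [IsScalarTower ℂ A A]
    (ω : A →ₗ[ℂ] ℂ)
    (hpos : ∀ a : A, (ω (star a * a)).im = 0 ∧ 0 ≤ (ω (star a * a)).re)
    (hherm : ∀ x : A, ω (star x) = starRingEnd ℂ (ω x))
    (δ : ℝ) (hδ : 0 < δ)
    (hHB : ∀ a : A, ‖ω a‖ ^ 2 ≤ δ * (ω (star a * a)).re)
    (hL3 : ∀ x : A, ∃ γx > 0, ∀ a : A,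
      ‖ω (star x * a)‖ ≤ γx * Real.sqrt (ω (star a * a)).re)
    (ζ : ℝ) (hζ : 0 < ζ)
    (hEHB : ∀ (x : A) (p : ℝ), 0 ≤ p →
      (∀ a : A, ‖ω (star x * a)‖ ^ 2 ≤ p * (ω (star a * a)).re) →
      ‖ω (star x)‖ ≤ ζ * Real.sqrt p)
    (γ : ℝ) (hγ : δ ≤ γ) :
    (∀ X : Unitization ℂ A, omegaExt ω γ (star X) = starRingEnd ℂ (omegaExt ω γ X)) ∧
    (∀ X : Unitization ℂ A, (omegaExt ω γ (star X * X)).im = 0 ∧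
      0 ≤ (omegaExt ω γ (star X * X)).re) ∧
    (∀ x : A, omegaExt ω γ (x : Unitization ℂ A) = ω x) ∧
    (∀ X : Unitization ℂ A, ∃ Γ > 0, ∀ Y : Unitization ℂ A,
      ‖omegaExt ω γ (star X * Y)‖ ≤ Γ * Real.sqrt (omegaExt ω γ (star Y * Y)).re) :=
  extension_representable_general ω hpos hherm δ hδ hHB γ hγ
end

section
/- Let ω be a positive linear functional on a non-unital complex *-algebra A. Then for every b ∈ A, sSup { t : ℝ | ∃ a ∈ A, ω (star a * a) = 1 ∧ t = ‖ω (star b * a)‖² } = (ω (star b * b)).re, where sSup denotes the supremum of a set of reals with the convention sSup ∅ = 0. (In particular the set is bounded above by (ω (star b * b)).re, and if (ω (star b * b)).re > 0 the value is attained at a = ((ω (star b * b)).re)^{-1/2} • b.) -/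
/-!
`⟪x, y⟫ = ω (star x * y)` is a positive semidefinite Hermitian form on `A`, so Cauchy–Schwarz gives
`‖ω (star b * a)‖ ^ 2 ≤ ω (star b * b) * ω (star a * a)`, bounding the set by `ω (star b * b)`.
If `ω (star b * b) > 0` the normalized vector `ω (star b * b) ^ (-1/2) • b` attains the bound;
otherwise the bound is `0`, which is also a lower bound of `sSup` of a set of nonnegative reals.
-/

open ComplexConjugate

section PositiveFunctional

variable {A : Type*} [NonUnitalRing A] [StarRing A] [Module ℂ A] [StarModule ℂ A]
  [SMulCommClass ℂ A A] [IsScalarTower ℂ A A] (ω : A →ₗ[ℂ] ℂ)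

/-- Polarization, using that `ω` is real on `star a * a` for `a = x + y` and `a = x + I • y`. -/
lemma conj_map_star_mul_of_im_eq_zero (hreal : ∀ a : A, (ω (star a * a)).im = 0) (x y : A) :
    conj (ω (star x * y)) = ω (star y * x) := by
  have h₁ : (ω (star x * x) + ω (star x * y) + ω (star y * x) + ω (star y * y)).im = 0 := by
    rw [← hreal (x + y)]
    simp only [star_add, add_mul, mul_add, map_add]
    congr 1
    ring
  have h₂ : (ω (star x * x) + Complex.I * ω (star x * y) - Complex.I * ω (star y * x)
      + ω (star y * y)).im = 0 := by
    rw [← hreal (x + Complex.I • y)]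
    simp only [star_add, star_smul, add_mul, mul_add, smul_mul_assoc, mul_smul_comm, map_add,
      map_smul, smul_eq_mul, RCLike.star_def, Complex.conj_I]
    congr 1
    linear_combination ω (star y * y) * Complex.I_mul_I
  have hx := hreal x
  have hy := hreal y
  apply Complex.ext <;>
    simp only [Complex.add_im, Complex.sub_im, Complex.mul_im, Complex.I_re, Complex.I_im,
      Complex.conj_re, Complex.conj_im] at h₁ h₂ ⊢ <;> linarith

abbrev preInnerProductSpaceCore
    (hpos : ∀ a : A, (ω (star a * a)).im = 0 ∧ 0 ≤ (ω (star a * a)).re) :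
    PreInnerProductSpace.Core ℂ A where
  inner x y := ω (star x * y)
  conj_inner_symm x y := conj_map_star_mul_of_im_eq_zero ω (fun a ↦ (hpos a).1) y x
  re_inner_nonneg x := (hpos x).2
  add_left x y z := by simp only [star_add, add_mul, map_add]
  smul_left x y r := by simp [smul_mul_assoc]

lemma norm_map_star_mul_sq_le
    (hpos : ∀ a : A, (ω (star a * a)).im = 0 ∧ 0 ≤ (ω (star a * a)).re) (a b : A) :
    ‖ω (star b * a)‖ ^ 2 ≤ (ω (star b * b)).re * (ω (star a * a)).re := by
  let _ := preInnerProductSpaceCore ω hpos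
  calc ‖ω (star b * a)‖ ^ 2 = ‖ω (star b * a)‖ * ‖ω (star a * b)‖ := by
        rw [sq, ← conj_map_star_mul_of_im_eq_zero ω (fun a ↦ (hpos a).1) b a, Complex.norm_conj]
    _ ≤ _ := InnerProductSpace.Core.inner_mul_inner_self_le (𝕜 := ℂ) b a

end PositiveFunctional

/-- **Lemma 3.2 ((HB) = (EHB) on `A₀`).** For a positive linear functional `ω` on a
non-unital complex *-algebra and any `b`, the supremum
`p_b(ω) = sup { |ω(b*a)|² : ω(a*a) = 1 }` equals `ω(b*b)`. -/
theorem pOmega_eq_of_mem {A : Type*} [NonUnitalRing A] [StarRing A] [Module ℂ A]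
    [StarModule ℂ A] [SMulCommClass ℂ A A] [IsScalarTower ℂ A A]
    (ω : A →ₗ[ℂ] ℂ)
    (hpos : ∀ a : A, (ω (star a * a)).im = 0 ∧ 0 ≤ (ω (star a * a)).re)
    (b : A) :
    sSup {t : ℝ | ∃ a : A, ω (star a * a) = 1 ∧ t = ‖ω (star b * a)‖ ^ 2}
      = (ω (star b * b)).re := by
  set S := {t : ℝ | ∃ a : A, ω (star a * a) = 1 ∧ t = ‖ω (star b * a)‖ ^ 2}
  set B := (ω (star b * b)).re
  have hB : ω (star b * b) = B := Complex.ext rfl (hpos b).1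
  have hbound : ∀ t ∈ S, t ≤ B := by
    rintro t ⟨a, ha, rfl⟩
    simpa [ha] using norm_map_star_mul_sq_le ω hpos a b
  refine le_antisymm (Real.sSup_le hbound (hpos b).2) ?_
  rcases (show 0 ≤ B from (hpos b).2).eq_or_lt with hB0 | hBpos
  · exact hB0 ▸ Real.sSup_nonneg (by rintro t ⟨a, -, rfl⟩; positivity)
  refine le_csSup ⟨B, hbound⟩ ⟨(((√B)⁻¹ : ℝ) : ℂ) • b, ?_, ?_⟩
  · rw [star_smul, smul_mul_assoc, mul_smul_comm, map_smul, map_smul, hB]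
    simp only [RCLike.star_def, Complex.conj_ofReal, smul_eq_mul]
    norm_cast
    field_simp
    exact (Real.sq_sqrt hBpos.le).symm
  · rw [mul_smul_comm, map_smul, hB, smul_eq_mul]
    norm_cast
    rw [Real.norm_eq_abs, sq_abs]
    field_simp
    exact Real.sq_sqrt hBpos.le
end

section
/- Let A be a non-unital C*-algebra and ω : A →L[ℂ] ℂ a continuous linear functional that is positive, i.e. for every a ∈ A the value ω (star a * a) has zero imaginary part and nonnegative real part. Then ω is Hilbert bounded with bound ‖ω‖: for every a ∈ A, ‖ω a‖² ≤ ‖ω‖ · (ω (star a * a)).re. -/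
/-!
The sesquilinear form `(x, y) ↦ ω (star x * y)` is positive semidefinite, so Cauchy–Schwarz gives
`‖ω (e * a)‖² ≤ ω (e * e) · ω (star a * a) ≤ ‖ω‖ · ω (star a * a)` for every self-adjoint `e` in the
unit ball. Letting `e` run through an approximate unit, `e * a → a`, and the bound passes to the
limit.
-/

open scoped ComplexOrder
open Filter Topology

section

variable {A : Type*} [NonUnitalCStarAlgebra A]

lemma ContinuousLinearMap.re_apply_star_mul_self_le_opNorm (ω : A →L[ℂ] ℂ) {e : A}
    (he : ‖e‖ ≤ 1) : (ω (star e * e)).re ≤ ‖ω‖ :=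
  calc (ω (star e * e)).re ≤ ‖ω (star e * e)‖ := Complex.re_le_norm _
    _ ≤ ‖ω‖ * ‖star e * e‖ := ω.le_opNorm _
    _ ≤ ‖ω‖ := by
      rw [CStarRing.norm_star_mul_self]
      exact mul_le_of_le_one_right (norm_nonneg _) (mul_le_one₀ he (norm_nonneg _) he)

section StarOrdered

variable [PartialOrder A] [StarOrderedRing A]

lemma PositiveLinearMap.norm_apply_star_mul_sq_le (f : A →ₚ[ℂ] ℂ) (x y : A) :
    ‖f (star x * y)‖ ^ 2 ≤ (f (star x * x)).re * (f (star y * y)).re := by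
  have hx := congrArg Complex.re (f.preGNS_norm_sq (f.toPreGNS x))
  have hy := congrArg Complex.re (f.preGNS_norm_sq (f.toPreGNS y))
  norm_cast at hx hy
  simp only [ofPreGNS_toPreGNS] at hx hy
  rw [← hx, ← hy, ← mul_pow]
  gcongr
  exact norm_inner_le_norm (𝕜 := ℂ) (f.toPreGNS x) (f.toPreGNS y)

lemma ContinuousLinearMap.norm_apply_sq_le_of_map_nonneg (ω : A →L[ℂ] ℂ)
    (hω : ∀ x, 0 ≤ x → 0 ≤ ω x) (a : A) :
    ‖ω a‖ ^ 2 ≤ ‖ω‖ * (ω (star a * a)).re := by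
  let f := PositiveLinearMap.mk₀ ω.toLinearMap hω
  have hu := CStarAlgebra.increasingApproximateUnit A
  have hlim : Tendsto (fun e ↦ ‖ω (e * a)‖ ^ 2) (CStarAlgebra.approximateUnit A)
      (𝓝 (‖ω a‖ ^ 2)) :=
    ((ω.continuous.tendsto a).comp (hu.tendsto_mul_right a)).norm.pow 2
  refine le_of_tendsto hlim ?_
  filter_upwards [hu.eventually_star_eq, hu.eventually_norm] with e he_star he_norm
  have hcs := f.norm_apply_star_mul_sq_le e a
  rw [he_star] at hcs
  calc ‖ω (e * a)‖ ^ 2 ≤ (ω (e * e)).re * (ω (star a * a)).re := hcs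
    _ ≤ ‖ω‖ * (ω (star a * a)).re := by
      gcongr
      · exact (hω _ (star_mul_self_nonneg a)).1
      · simpa only [he_star] using ω.re_apply_star_mul_self_le_opNorm he_norm

end StarOrdered

end

/-- **Positive functionals on non-unital C*-algebras are Hilbert bounded.** If `ω` is a
positive continuous linear functional on a non-unital C*-algebra, then
`‖ω a‖² ≤ ‖ω‖ · ω(a*a)` for every `a`. -/
theorem positive_functional_hilbertBounded {A : Type*} [NonUnitalCStarAlgebra A]
    (ω : A →L[ℂ] ℂ)
    (hpos : ∀ a : A, (ω (star a * a)).im = 0 ∧ 0 ≤ (ω (star a * a)).re) :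
    ∀ a : A, ‖ω a‖ ^ 2 ≤ ‖ω‖ * (ω (star a * a)).re := by
  -- In the spectral order the nonnegative elements are exactly the `star b * b`.
  let := CStarAlgebra.spectralOrder A
  have := CStarAlgebra.spectralOrderedRing A
  refine ω.norm_apply_sq_le_of_map_nonneg fun x hx ↦ ?_
  obtain ⟨b, rfl⟩ := CStarAlgebra.nonneg_iff_eq_star_mul_self.mp hx
  exact Complex.nonneg_iff.mpr ⟨(hpos b).2, (hpos b).1.symm⟩
end

section
/- Let ω be a positive linear functional on a non-unital complex *-algebra A. For x ∈ A let p_ω(x) = sSup { t : ℝ | ∃ a ∈ A, ω (star a * a) = 1 ∧ t = ‖ω (star x * a)‖² } (with the convention sSup ∅ = 0). Then for every x ∈ A and every λ ∈ ℂ, Real.sqrt (p_ω (λ • x)) = ‖λ‖ · Real.sqrt (p_ω x). -/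
/-- `p_ω(x) = sup { |ω(x*a)|² : ω(a*a) = 1 }` (with `sSup ∅ = 0`). -/
noncomputable def pOmega {A : Type*} [NonUnitalRing A] [StarRing A] [Module ℂ A]
    (ω : A →ₗ[ℂ] ℂ) (x : A) : ℝ :=
  sSup {t : ℝ | ∃ a : A, ω (star a * a) = 1 ∧ t = ‖ω (star x * a)‖ ^ 2}

section

variable {A : Type*} [NonUnitalRing A] [StarRing A] [Module ℂ A] [StarModule ℂ A]
  [IsScalarTower ℂ A A] (ω : A →ₗ[ℂ] ℂ)

theorem norm_apply_star_smul_mul (c : ℂ) (x a : A) :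
    ‖ω (star (c • x) * a)‖ = ‖c‖ * ‖ω (star x * a)‖ := by
  rw [star_smul, smul_mul_assoc, map_smul, smul_eq_mul, norm_mul, Complex.star_def,
    Complex.norm_conj]

open scoped Pointwise in
theorem pOmega_smul (c : ℂ) (x : A) : pOmega ω (c • x) = ‖c‖ ^ 2 * pOmega ω x := by
  have hset : {t : ℝ | ∃ a : A, ω (star a * a) = 1 ∧ t = ‖ω (star (c • x) * a)‖ ^ 2}
      = (‖c‖ ^ 2) • {t : ℝ | ∃ a : A, ω (star a * a) = 1 ∧ t = ‖ω (star x * a)‖ ^ 2} := by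
    ext t
    simp only [Set.mem_smul_set, Set.mem_ofPred_eq, smul_eq_mul, norm_apply_star_smul_mul, mul_pow]
    constructor
    · rintro ⟨a, ha, rfl⟩
      exact ⟨_, ⟨a, ha, rfl⟩, rfl⟩
    · rintro ⟨_, ⟨a, ha, rfl⟩, rfl⟩
      exact ⟨a, ha, rfl⟩
  rw [pOmega, hset, Real.sSup_smul_of_nonneg (by positivity), smul_eq_mul, pOmega]

end

theorem sqrt_pOmega_smul_general {A : Type*} [NonUnitalRing A] [StarRing A] [Module ℂ A]
    [StarModule ℂ A] [IsScalarTower ℂ A A]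
    (ω : A →ₗ[ℂ] ℂ) :
    ∀ (x : A) (lam : ℂ),
      Real.sqrt (pOmega ω (lam • x)) = ‖lam‖ * Real.sqrt (pOmega ω x) := by
  intro x lam
  rw [pOmega_smul, Real.sqrt_mul (by positivity), Real.sqrt_sq (norm_nonneg _)]

/-- **Absolute homogeneity of the seminorm `x ↦ √(p_ω(x))`.** -/
theorem sqrt_pOmega_smul {A : Type*} [NonUnitalRing A] [StarRing A] [Module ℂ A]
    [StarModule ℂ A] [SMulCommClass ℂ A A] [IsScalarTower ℂ A A]
    (ω : A →ₗ[ℂ] ℂ)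
    (hpos : ∀ a : A, (ω (star a * a)).im = 0 ∧ 0 ≤ (ω (star a * a)).re) :
    ∀ (x : A) (lam : ℂ),
      Real.sqrt (pOmega ω (lam • x)) = ‖lam‖ * Real.sqrt (pOmega ω x) :=
  sqrt_pOmega_smul_general ω
end

section
/- Let ω be a positive linear functional on a non-unital complex *-algebra A. For x ∈ A let p_ω(x) = sSup { t : ℝ | ∃ a ∈ A, ω (star a * a) = 1 ∧ t = ‖ω (star x * a)‖² } (with the convention sSup ∅ = 0). Then for all x, y ∈ A, Real.sqrt (p_ω (x + y)) ≤ Real.sqrt (p_ω x) + Real.sqrt (p_ω y); together with absolute homogeneity this shows that x ↦ Real.sqrt (p_ω x) is a seminorm on A. -/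
/-!
`(x, y) ↦ ω(x^* y)` is a positive semidefinite form, Hermitian by polarization, so Cauchy–Schwarz
gives `|ω(x^* a)|² ≤ ω(x^* x)` whenever `ω(a^* a) = 1`. Hence the supremum defining `p_ω(x)` is
finite, `√p_ω(x)` is the supremum of the `|ω(x^* a)|`, and subadditivity is the triangle
inequality in `ℂ` applied to `ω((x + y)^* a) = ω(x^* a) + ω(y^* a)`.
-/

open ComplexConjugate

section StarAlgebra

variable {A : Type*} [NonUnitalRing A] [StarRing A] [Module ℂ A]
    [StarModule ℂ A] [SMulCommClass ℂ A A] [IsScalarTower ℂ A A]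

lemma map_star_add_smul_mul_add_smul (ω : A →ₗ[ℂ] ℂ) (u v : A) (t : ℂ) :
    ω (star (u + t • v) * (u + t • v)) =
      ω (star u * u) + t * ω (star u * v) + conj t * ω (star v * u)
        + conj t * t * ω (star v * v) := by
  simp only [star_add, star_smul, add_mul, mul_add, smul_mul_assoc, mul_smul_comm, map_add,
    map_smul, smul_eq_mul, starRingEnd_apply]
  ring

/-- Polarization: expand `ω((x + t y)^* (x + t y))` at `t = 1` and `t = i`. -/
theorem map_star_mul_eq_conj (ω : A →ₗ[ℂ] ℂ) (hreal : ∀ a : A, (ω (star a * a)).im = 0)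
    (x y : A) : ω (star y * x) = conj (ω (star x * y)) := by
  have h₁ := hreal (x + (1 : ℂ) • y)
  have hI := hreal (x + Complex.I • y)
  rw [map_star_add_smul_mul_add_smul] at h₁ hI
  have hx := hreal x
  have hy := hreal y
  simp only [map_one, one_mul, Complex.add_im, Complex.mul_im, Complex.mul_re,
    Complex.conj_I, Complex.I_re, Complex.I_im, Complex.neg_re, Complex.neg_im] at h₁ hI
  apply Complex.ext <;> simp only [Complex.conj_re, Complex.conj_im] <;> linarith

abbrev preInnerProductCoreOfPositive (ω : A →ₗ[ℂ] ℂ)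
    (hpos : ∀ a : A, (ω (star a * a)).im = 0 ∧ 0 ≤ (ω (star a * a)).re) :
    PreInnerProductSpace.Core ℂ A where
  inner x y := ω (star x * y)
  conj_inner_symm x y := (map_star_mul_eq_conj ω (fun a ↦ (hpos a).1) y x).symm
  re_inner_nonneg x := (hpos x).2
  add_left x y z := by simp only [star_add, add_mul, map_add]
  smul_left x y r := by simp only [star_smul, smul_mul_assoc, map_smul, smul_eq_mul]; rfl

theorem sq_norm_map_star_mul_le (ω : A →ₗ[ℂ] ℂ)
    (hpos : ∀ a : A, (ω (star a * a)).im = 0 ∧ 0 ≤ (ω (star a * a)).re) (x y : A) :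
    ‖ω (star x * y)‖ ^ 2 ≤ (ω (star x * x)).re * (ω (star y * y)).re := by
  have h := InnerProductSpace.Core.inner_mul_inner_self_le
    (c := preInnerProductCoreOfPositive ω hpos) x y
  change ‖ω (star x * y)‖ * ‖ω (star y * x)‖ ≤ (ω (star x * x)).re * (ω (star y * y)).re at h
  rwa [map_star_mul_eq_conj ω (fun a ↦ (hpos a).1) x y, Complex.norm_conj, ← sq] at h

end StarAlgebra

section pOmega

variable {A : Type*} [NonUnitalRing A] [StarRing A] [Module ℂ A]

theorem sqrt_pOmega_le_of_forall {ω : A →ₗ[ℂ] ℂ} {z : A} {c : ℝ} (hc : 0 ≤ c)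
    (h : ∀ a : A, ω (star a * a) = 1 → ‖ω (star z * a)‖ ≤ c) : √(pOmega ω z) ≤ c := by
  refine Real.sqrt_le_iff.mpr ⟨hc, Real.sSup_le ?_ (sq_nonneg c)⟩
  rintro t ⟨a, ha, rfl⟩
  exact pow_le_pow_left₀ (norm_nonneg _) (h a ha) 2

variable [StarModule ℂ A] [SMulCommClass ℂ A A] [IsScalarTower ℂ A A]

theorem sq_norm_le_pOmega (ω : A →ₗ[ℂ] ℂ)
    (hpos : ∀ a : A, (ω (star a * a)).im = 0 ∧ 0 ≤ (ω (star a * a)).re)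
    {z a : A} (ha : ω (star a * a) = 1) : ‖ω (star z * a)‖ ^ 2 ≤ pOmega ω z := by
  have hbdd : BddAbove {t : ℝ | ∃ a : A, ω (star a * a) = 1 ∧ t = ‖ω (star z * a)‖ ^ 2} := by
    refine ⟨(ω (star z * z)).re, ?_⟩
    rintro t ⟨b, hb, rfl⟩
    simpa only [hb, Complex.one_re, mul_one] using sq_norm_map_star_mul_le ω hpos z b
  exact le_csSup hbdd ⟨a, ha, rfl⟩

theorem norm_le_sqrt_pOmega (ω : A →ₗ[ℂ] ℂ)
    (hpos : ∀ a : A, (ω (star a * a)).im = 0 ∧ 0 ≤ (ω (star a * a)).re)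
    {z a : A} (ha : ω (star a * a) = 1) : ‖ω (star z * a)‖ ≤ √(pOmega ω z) :=
  Real.le_sqrt_of_sq_le (sq_norm_le_pOmega ω hpos ha)

end pOmega

/-- **Subadditivity of the seminorm `x ↦ √(p_ω(x))`.** -/
theorem sqrt_pOmega_add_le {A : Type*} [NonUnitalRing A] [StarRing A] [Module ℂ A]
    [StarModule ℂ A] [SMulCommClass ℂ A A] [IsScalarTower ℂ A A]
    (ω : A →ₗ[ℂ] ℂ)
    (hpos : ∀ a : A, (ω (star a * a)).im = 0 ∧ 0 ≤ (ω (star a * a)).re) :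
    ∀ x y : A,
      Real.sqrt (pOmega ω (x + y)) ≤ Real.sqrt (pOmega ω x) + Real.sqrt (pOmega ω y) := by
  intro x y
  refine sqrt_pOmega_le_of_forall (by positivity) fun a ha ↦ ?_
  calc ‖ω (star (x + y) * a)‖ = ‖ω (star x * a) + ω (star y * a)‖ := by
        rw [star_add, add_mul, map_add]
    _ ≤ ‖ω (star x * a)‖ + ‖ω (star y * a)‖ := norm_add_le _ _
    _ ≤ √(pOmega ω x) + √(pOmega ω y) :=
        add_le_add (norm_le_sqrt_pOmega ω hpos ha) (norm_le_sqrt_pOmega ω hpos ha)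
end
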